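/- If Ω is a bounded open subset of ℝ^N, then its Steiner symmetrization Ω^♯ := {(x', x_N) : |x_N| < ℓ_Ω(x')/2} is an open subset of ℝ^N. -/
import Mathlib


open MeasureTheory
open scoped Classical

/-- The section length `ℓ_Ω(x')`, set to `0` if the section is not measurable. -/
noncomputable def sectionLength {n : ℕ} (Ω : Set ((Fin n → ℝ) × ℝ)) (x' : Fin n → ℝ) : ENNReal :=
  if MeasurableSet {t : ℝ | (x', t) ∈ Ω} then volume {t : ℝ | (x', t) ∈ Ω} else 0

/-- Steiner symmetrization with respect to the hyperplane `{x_N = 0}`: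
`Ω^♯ = {(x', x_N) : |x_N| < ℓ_Ω(x')/2}`. -/
noncomputable def steiner {n : ℕ} (Ω : Set ((Fin n → ℝ) × ℝ)) : Set ((Fin n → ℝ) × ℝ) :=
  {p | ENNReal.ofReal (2 * |p.2|) < sectionLength Ω p.1}

/-- If `Ω ⊆ ℝ^N` is a bounded open set, then its Steiner symmetrization `Ω^♯` is open. -/
theorem steiner_isOpen {n : ℕ} (Ω : Set ((Fin n → ℝ) × ℝ)) (hΩ : IsOpen Ω)
    (hb : Bornology.IsBounded Ω) : IsOpen (steiner Ω) := by
  -- sections are open, hence measurable, so `sectionLength` is the volume of the section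
  have hsec : ∀ x' : Fin n → ℝ, IsOpen {t : ℝ | (x', t) ∈ Ω} := fun x' =>
    hΩ.preimage (Continuous.prodMk_right x')
  have hlen : ∀ x' : Fin n → ℝ, sectionLength Ω x' = volume {t : ℝ | (x', t) ∈ Ω} := fun x' => by
    simp [sectionLength, (hsec x').measurableSet]
  -- sections are bounded, hence of finite measure
  obtain ⟨R, hR⟩ := hb.subset_closedBall 0
  have hfin : ∀ x' : Fin n → ℝ, volume {t : ℝ | (x', t) ∈ Ω} ≠ ⊤ := by
    intro x'
    have hsub : {t : ℝ | (x', t) ∈ Ω} ⊆ Set.Icc (-R) R := by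
      intro t ht
      have := hR ht
      rw [Metric.mem_closedBall, dist_zero_right] at this
      have h2 : |t| ≤ R := le_trans (norm_snd_le ((x', t) : (Fin n → ℝ) × ℝ)) this
      exact abs_le.1 h2
    exact ne_top_of_le_ne_top (by simp [Real.volume_Icc]) (measure_mono hsub)
  rw [isOpen_iff_forall_mem_open]
  rintro ⟨x', t⟩ hp
  simp only [steiner, Set.mem_setOf_eq, hlen] at hp
  set S := {s : ℝ | (x', s) ∈ Ω} with hS
  set c := (volume S).toReal with hc
  have hVfin : volume S ≠ ⊤ := hfin x'
  have hct : 2 * |t| < c := by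
    have := (ENNReal.ofReal_lt_iff_lt_toReal (by positivity) hVfin).1 hp
    exact this
  set ε : ℝ := (c - 2 * |t|) / 2 with hε
  have hεpos : 0 < ε := by
    dsimp [ε]; linarith
  -- inner regularity: find a compact subset of the section of almost full measure
  obtain ⟨K, hKS, hKc, hKv⟩ := (hsec x').measurableSet.exists_isCompact_lt_add hVfin
    (ε := ENNReal.ofReal ε) (by simpa using hεpos)
  have hKfin : volume K ≠ ⊤ := ne_top_of_le_ne_top hVfin (measure_mono hKS)
  have hKreal : c - ε < (volume K).toReal := by
    have h1 : volume S < volume K + ENNReal.ofReal ε := hKv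
    have h2 : (volume K + ENNReal.ofReal ε).toReal = (volume K).toReal + ε := by
      rw [ENNReal.toReal_add hKfin ENNReal.ofReal_ne_top, ENNReal.toReal_ofReal hεpos.le]
    have h3 : c < (volume K).toReal + ε := by
      rw [← h2]
      exact ENNReal.toReal_lt_toReal hVfin (by finiteness) |>.2 h1
    linarith
  -- tube lemma
  have hsub : ({x'} : Set (Fin n → ℝ)) ×ˢ K ⊆ Ω := by
    rintro ⟨y', s⟩ ⟨hy, hs⟩
    rcases hy with rfl
    exact hKS hs
  obtain ⟨u, v, hu, hv, hxu, hKv', huv⟩ :=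
    generalized_tube_lemma isCompact_singleton hKc hΩ hsub
  refine ⟨u ×ˢ Metric.ball t (ε / 2), ?_, hu.prod Metric.isOpen_ball, ?_, ?_⟩
  · rintro ⟨y', s⟩ ⟨hy, hs⟩
    simp only [steiner, Set.mem_setOf_eq, hlen]
    have hKsec : K ⊆ {r : ℝ | (y', r) ∈ Ω} := fun r hr => huv ⟨hy, hKv' hr⟩
    have hsmall : 2 * |s| < (volume K).toReal := by
      have : |s - t| < ε / 2 := by
        simpa [Real.dist_eq] using hs
      have habs : |s| < |t| + ε / 2 := by
        calc |s| = |t + (s - t)| := by ring_nf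
        _ ≤ |t| + |s - t| := abs_add_le _ _
        _ < |t| + ε / 2 := by linarith
      have : c - ε = 2 * |t| + ε := by dsimp [ε]; ring
      linarith
    calc ENNReal.ofReal (2 * |s|) < volume K :=
          (ENNReal.ofReal_lt_iff_lt_toReal (by positivity) hKfin).2 hsmall
      _ ≤ volume {r : ℝ | (y', r) ∈ Ω} := measure_mono hKsec
  · exact hxu (Set.mem_singleton x')
  · exact Metric.mem_ball_self (by positivity)
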